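/- Let N_s(t) be the number of visits to state s of an irreducible aperiodic finite Markov chain up to time t, and N_{sš}(t) the number of one-step transitions from s to š up to time t. Then the estimator p̂_{sš}(t) = N_{sš}(t)/N_s(t) converges almost surely to the transition probability p_{sš} as t → ∞. -/

import Mathlib

open MeasureTheory Filter
set_option linter.unusedSectionVars false
namespace Stmt11
variable {S : Type*} [Fintype S] [DecidableEq S] [MeasurableSpace S] [MeasurableSingletonClass S]
variable {Ω : Type*} [MeasurableSpace Ω] {ℙ : Measure Ω} [IsProbabilityMeasure ℙ]
variable {X : ℕ → Ω → S} {p : Matrix S S ℝ}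

/-- integral of a constant on an ite set -/
lemma int_ite {P : Ω → Prop} [DecidablePred P] (hP : MeasurableSet {ω | P ω}) (c : ℝ) :
    ∫ ω, (if P ω then c else 0) ∂ℙ = c * (ℙ {ω | P ω}).toReal := by
  have h : (fun ω => if P ω then c else 0) = Set.indicator {ω | P ω} (fun _ => c) := by
    ext ω; by_cases h : P ω <;> simp [Set.indicator_apply, h]
  rw [h, integral_indicator_const c hP, smul_eq_mul, mul_comm]; rfl

lemma integrable_ite {P : Ω → Prop} [DecidablePred P] (hP : MeasurableSet {ω | P ω}) (c : ℝ) :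
    Integrable (fun ω => if P ω then c else 0) ℙ := by
  have h : (fun ω => if P ω then c else 0) = Set.indicator {ω | P ω} (fun _ => c) := by
    ext ω; by_cases h : P ω <;> simp [Set.indicator_apply, h]
  rw [h]
  exact (integrable_const c).indicator hP

lemma meas_eq (hmeas : ∀ n, Measurable (X n)) (n : ℕ) (a : S) :
    MeasurableSet {ω | X n ω = a} := by
  have : {ω | X n ω = a} = X n ⁻¹' {a} := by ext ω; simp
  rw [this]; exact (hmeas n) (measurableSet_singleton a)

lemma meas_cyl (hmeas : ∀ n, Measurable (X n)) (m : ℕ) (f : Fin m → S) :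
    MeasurableSet {ω | ∀ k : Fin m, X k ω = f k} := by
  have : {ω | ∀ k : Fin m, X k ω = f k} = ⋂ k : Fin m, {ω | X (k : ℕ) ω = f k} := by
    ext ω; simp [Set.mem_iInter]
  rw [this]; exact MeasurableSet.iInter fun k => meas_eq hmeas k (f k)

lemma fin_succ_forall (n : ℕ) (f : Fin (n+1) → S) (ω : Ω) :
    (∀ k : Fin (n+1), X k ω = f k) ↔
      ((∀ k : Fin n, X (k : ℕ) ω = f k.castSucc) ∧ X n ω = f (Fin.last n)) := by
  constructor
  · intro h
    refine ⟨fun k => by simpa using h k.castSucc, by simpa using h (Fin.last n)⟩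
  · rintro ⟨h1, h2⟩ k
    induction k using Fin.lastCases with
    | last => simpa using h2
    | cast i => simpa using h1 i

/-- the core one-step Markov identity at the level of integrals. -/
lemma core (hmeas : ∀ n, Measurable (X n))
    (hMarkov : ∀ (n : ℕ) (f : Fin n → S) (s s' : S),
      (ℙ {ω | (∀ k : Fin n, X k ω = f k) ∧ X n ω = s ∧ X (n + 1) ω = s'}).toReal
        = p s s' * (ℙ {ω | (∀ k : Fin n, X k ω = f k) ∧ X n ω = s}).toReal)
    (n : ℕ) (F : (Fin (n+1) → S) → ℝ) (s0 s1 : S) :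
    ∫ ω, F (fun k => X k ω) *
        ((if X n ω = s0 then (1:ℝ) else 0) * (if X (n+1) ω = s1 then (1:ℝ) else 0)) ∂ℙ
      = p s0 s1 * ∫ ω, F (fun k => X k ω) * (if X n ω = s0 then (1:ℝ) else 0) ∂ℙ := by
  classical
  -- pointwise decomposition over cylinders
  have point : ∀ (Q : Ω → Prop) (_ : DecidablePred Q) (ω : Ω),
      F (fun k : Fin (n+1) => X k ω) * (if Q ω then (1:ℝ) else 0)
        = ∑ f : Fin (n+1) → S,
            (if (∀ k : Fin (n+1), X k ω = f k) ∧ Q ω then F f else 0) := by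
    intro Q _ ω
    rw [Finset.sum_eq_single (fun k : Fin (n+1) => X k ω)]
    · by_cases hq : Q ω <;> simp [hq]
    · intro f _ hne
      rw [if_neg]
      rintro ⟨h, -⟩
      exact hne (funext fun k => (h k).symm)
    · intro h; exact absurd (Finset.mem_univ _) h
  have msets : ∀ (f : Fin (n+1) → S) (Q : Ω → Prop) (_ : DecidablePred Q),
      MeasurableSet {ω | Q ω} →
      MeasurableSet {ω | (∀ k : Fin (n+1), X k ω = f k) ∧ Q ω} := by
    intro f Q _ hQ
    have : {ω | (∀ k : Fin (n+1), X k ω = f k) ∧ Q ω}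
        = {ω | ∀ k : Fin (n+1), X k ω = f k} ∩ {ω | Q ω} := rfl
    rw [this]; exact (meas_cyl hmeas _ f).inter hQ
  have hQpair : MeasurableSet {ω | X n ω = s0 ∧ X (n+1) ω = s1} := by
    have : {ω | X n ω = s0 ∧ X (n+1) ω = s1} = {ω | X n ω = s0} ∩ {ω | X (n+1) ω = s1} := rfl
    rw [this]; exact (meas_eq hmeas n s0).inter (meas_eq hmeas (n+1) s1)
  have hQone : MeasurableSet {ω | X n ω = s0} := meas_eq hmeas n s0
  -- rewrite both integrals as sums
  have eq1 : ∫ ω, F (fun k => X k ω) *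
        ((if X n ω = s0 then (1:ℝ) else 0) * (if X (n+1) ω = s1 then (1:ℝ) else 0)) ∂ℙ
      = ∑ f : Fin (n+1) → S, F f *
          (ℙ {ω | (∀ k : Fin (n+1), X k ω = f k) ∧ (X n ω = s0 ∧ X (n+1) ω = s1)}).toReal := by
    have : ∀ ω, F (fun k : Fin (n+1) => X k ω) *
        ((if X n ω = s0 then (1:ℝ) else 0) * (if X (n+1) ω = s1 then (1:ℝ) else 0))
        = ∑ f : Fin (n+1) → S,
            (if (∀ k : Fin (n+1), X k ω = f k) ∧ (X n ω = s0 ∧ X (n+1) ω = s1) then F f else 0) := by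
      intro ω
      have := point (fun ω => X n ω = s0 ∧ X (n+1) ω = s1) inferInstance ω
      rw [← this]
      by_cases h1 : X n ω = s0 <;> by_cases h2 : X (n+1) ω = s1 <;> simp [h1, h2]
    rw [integral_congr_ae (Filter.Eventually.of_forall this)]
    rw [integral_finset_sum _ (fun f _ => integrable_ite (msets f _ inferInstance hQpair) (F f))]
    exact Finset.sum_congr rfl fun f _ => int_ite (msets f _ inferInstance hQpair) (F f)
  have eq2 : ∫ ω, F (fun k => X k ω) * (if X n ω = s0 then (1:ℝ) else 0) ∂ℙ
      = ∑ f : Fin (n+1) → S, F f *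
          (ℙ {ω | (∀ k : Fin (n+1), X k ω = f k) ∧ X n ω = s0}).toReal := by
    have : ∀ ω, F (fun k : Fin (n+1) => X k ω) * (if X n ω = s0 then (1:ℝ) else 0)
        = ∑ f : Fin (n+1) → S,
            (if (∀ k : Fin (n+1), X k ω = f k) ∧ X n ω = s0 then F f else 0) :=
      fun ω => point (fun ω => X n ω = s0) inferInstance ω
    rw [integral_congr_ae (Filter.Eventually.of_forall this)]
    rw [integral_finset_sum _ (fun f _ => integrable_ite (msets f _ inferInstance hQone) (F f))]
    exact Finset.sum_congr rfl fun f _ => int_ite (msets f _ inferInstance hQone) (F f)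
  rw [eq1, eq2, Finset.mul_sum]
  refine Finset.sum_congr rfl fun f _ => ?_
  by_cases hf : f (Fin.last n) = s0
  · have e1 : {ω | (∀ k : Fin (n+1), X k ω = f k) ∧ (X n ω = s0 ∧ X (n+1) ω = s1)}
        = {ω | (∀ k : Fin n, X (k:ℕ) ω = f k.castSucc) ∧ X n ω = s0 ∧ X (n+1) ω = s1} := by
      ext ω
      simp only [Set.mem_setOf_eq, fin_succ_forall n f ω]
      constructor
      · rintro ⟨⟨h1, _⟩, h2⟩; exact ⟨h1, h2⟩
      · rintro ⟨h1, h2, h3⟩; exact ⟨⟨h1, by rw [hf]; exact h2⟩, h2, h3⟩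
    have e2 : {ω | (∀ k : Fin (n+1), X k ω = f k) ∧ X n ω = s0}
        = {ω | (∀ k : Fin n, X (k:ℕ) ω = f k.castSucc) ∧ X n ω = s0} := by
      ext ω
      simp only [Set.mem_setOf_eq, fin_succ_forall n f ω]
      constructor
      · rintro ⟨⟨h1, _⟩, h2⟩; exact ⟨h1, h2⟩
      · rintro ⟨h1, h2⟩; exact ⟨⟨h1, by rw [hf]; exact h2⟩, h2⟩
    rw [e1, e2, hMarkov n (fun k => f k.castSucc) s0 s1]
    ring
  · have e1 : {ω | (∀ k : Fin (n+1), X k ω = f k) ∧ (X n ω = s0 ∧ X (n+1) ω = s1)} = ∅ := by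
      apply Set.eq_empty_iff_forall_notMem.2
      rintro ω ⟨h1, h2, -⟩
      exact hf (by rw [← ((fin_succ_forall n f ω).1 h1).2]; exact h2)
    have e2 : {ω | (∀ k : Fin (n+1), X k ω = f k) ∧ X n ω = s0} = ∅ := by
      apply Set.eq_empty_iff_forall_notMem.2
      rintro ω ⟨h1, h2⟩
      exact hf (by rw [← ((fin_succ_forall n f ω).1 h1).2]; exact h2)
    rw [e1, e2]
    simp
/-- `W` is a function of `X 0, ..., X n`. -/
def Det (X : ℕ → Ω → S) (n : ℕ) (W : Ω → ℝ) : Prop :=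
  ∃ F : (Fin (n+1) → S) → ℝ, ∀ ω, W ω = F (fun k => X k ω)

lemma det_of_ext {n : ℕ} {W : Ω → ℝ}
    (h : ∀ ω₁ ω₂, (∀ k, k ≤ n → X k ω₁ = X k ω₂) → W ω₁ = W ω₂) : Det X n W := by
  classical
  refine ⟨fun g => if hg : ∃ ω, ∀ k : Fin (n+1), X k ω = g k then W hg.choose else 0, fun ω => ?_⟩
  have hg : ∃ ω', ∀ k : Fin (n+1), X k ω' = (fun k : Fin (n+1) => X k ω) k := ⟨ω, fun _ => rfl⟩
  change W ω = dite _ _ _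
  rw [dif_pos hg]
  refine h ω hg.choose fun k hk => ?_
  exact (hg.choose_spec ⟨k, Nat.lt_succ_of_le hk⟩).symm

lemma Det.mono {n m : ℕ} {W : Ω → ℝ} (h : Det X n W) (hnm : n ≤ m) : Det X m W := by
  obtain ⟨F, hF⟩ := h
  refine det_of_ext fun ω₁ ω₂ hX => ?_
  rw [hF ω₁, hF ω₂]
  congr 1
  funext k
  exact hX k (Nat.le_of_lt_succ (lt_of_lt_of_le k.2 (by omega)))

lemma Det.mul {n : ℕ} {W W' : Ω → ℝ} (h : Det X n W) (h' : Det X n W') :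
    Det X n (fun ω => W ω * W' ω) := by
  obtain ⟨F, hF⟩ := h; obtain ⟨F', hF'⟩ := h'
  exact ⟨fun g => F g * F' g, fun ω => by show W ω * W' ω = F _ * F' _; rw [hF, hF']⟩

lemma Det.measurable (hmeas : ∀ n, Measurable (X n)) {n : ℕ} {W : Ω → ℝ} (h : Det X n W) :
    Measurable W := by
  obtain ⟨F, hF⟩ := h
  have : W = F ∘ (fun ω (k : Fin (n+1)) => X k ω) := funext hF
  rw [this]
  exact (measurable_of_countable F).comp (measurable_pi_lambda _ fun k => hmeas k)

lemma Det.bounded {n : ℕ} {W : Ω → ℝ} (h : Det X n W) : ∃ C, ∀ ω, |W ω| ≤ C := by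
  obtain ⟨F, hF⟩ := h
  refine ⟨∑ g : Fin (n+1) → S, |F g|, fun ω => ?_⟩
  rw [hF]
  exact Finset.single_le_sum (f := fun g => |F g|) (fun g _ => abs_nonneg _) (Finset.mem_univ _)

lemma Det.integrable_mul (hmeas : ∀ n, Measurable (X n)) {n : ℕ} {W : Ω → ℝ} (h : Det X n W)
    {g : Ω → ℝ} (hg : Measurable g) (hgb : ∀ ω, |g ω| ≤ 1) :
    Integrable (fun ω => W ω * g ω) ℙ := by
  obtain ⟨C, hC⟩ := h.bounded
  refine Integrable.mono' (integrable_const C) (((h.measurable hmeas).mul hg).aestronglyMeasurable)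
    (Filter.Eventually.of_forall fun ω => ?_)
  rw [norm_mul]
  calc ‖W ω‖ * ‖g ω‖ ≤ C * 1 := by
        exact mul_le_mul (hC ω) (hgb ω) (norm_nonneg _) ((abs_nonneg _).trans (hC ω))
      _ = C := mul_one C

lemma Det.integrable (hmeas : ∀ n, Measurable (X n)) {n : ℕ} {W : Ω → ℝ} (h : Det X n W) :
    Integrable W ℙ := by
  have := h.integrable_mul (ℙ := ℙ) hmeas (g := fun _ => 1) measurable_const (by norm_num)
  simpa using this

/-- multi-step Markov identity -/
lemma core_j (hmeas : ∀ n, Measurable (X n))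
    (hMarkov : ∀ (n : ℕ) (f : Fin n → S) (s s' : S),
      (ℙ {ω | (∀ k : Fin n, X k ω = f k) ∧ X n ω = s ∧ X (n + 1) ω = s'}).toReal
        = p s s' * (ℙ {ω | (∀ k : Fin n, X k ω = f k) ∧ X n ω = s}).toReal)
    (j : ℕ) :
    ∀ (n : ℕ) (W : Ω → ℝ), Det X n W → ∀ (s0 s1 : S),
    ∫ ω, W ω * ((if X n ω = s0 then (1:ℝ) else 0) * (if X (n+j) ω = s1 then (1:ℝ) else 0)) ∂ℙ
      = (p^j) s0 s1 * ∫ ω, W ω * (if X n ω = s0 then (1:ℝ) else 0) ∂ℙ := by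
  induction j with
  | zero =>
    intro n W hW s0 s1
    rw [pow_zero, Matrix.one_apply]
    by_cases h01 : s0 = s1
    · subst h01
      simp only [if_true, Nat.add_zero, one_mul]
      congr 1
      funext ω
      by_cases h : X n ω = s0 <;> simp [h]
    · rw [if_neg h01, zero_mul]
      have : ∀ ω, W ω * ((if X n ω = s0 then (1:ℝ) else 0) * (if X (n+0) ω = s1 then (1:ℝ) else 0)) = 0 := by
        intro ω
        by_cases h : X n ω = s0
        · rw [if_pos h, if_neg (by rw [Nat.add_zero, h]; exact h01), mul_zero, mul_zero]
        · rw [if_neg h, zero_mul, mul_zero]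
      rw [integral_congr_ae (Filter.Eventually.of_forall this), integral_zero]
  | succ j ih =>
    intro n W hW s0 s1
    -- W * ind(X n = s0) is Det at level n + j
    have hWd : Det X (n+j) (fun ω => W ω * (if X n ω = s0 then (1:ℝ) else 0)) := by
      refine (hW.mul (det_of_ext fun ω₁ ω₂ hX => ?_)).mono (by omega)
      rw [hX n (le_refl n)]
    have hWind : ∀ (k : ℕ) (a : S), Measurable (fun ω => if X k ω = a then (1:ℝ) else 0) :=
      fun k a => Measurable.ite (meas_eq hmeas k a) measurable_const measurable_const
    have hWindb : ∀ (k : ℕ) (a : S) (ω : Ω), |if X k ω = a then (1:ℝ) else 0| ≤ 1 := by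
      intro k a ω; by_cases h : X k ω = a <;> simp [h]
    -- insert partition over X (n+j)
    have pointwise : ∀ ω, W ω * ((if X n ω = s0 then (1:ℝ) else 0) * (if X (n+(j+1)) ω = s1 then (1:ℝ) else 0))
        = ∑ s2 : S, (W ω * (if X n ω = s0 then (1:ℝ) else 0)) *
            ((if X (n+j) ω = s2 then (1:ℝ) else 0) * (if X ((n+j)+1) ω = s1 then (1:ℝ) else 0)) := by
      intro ω
      rw [Finset.sum_eq_single (X (n+j) ω)]
      · have : ((n+j)+1) = n + (j+1) := by omega
        rw [this]; simp [mul_assoc]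
      · intro s2 _ hne
        rw [if_neg (show ¬ (X (n+j) ω = s2) from fun h => hne h.symm)]
        ring
      · intro h; exact absurd (Finset.mem_univ _) h
    rw [integral_congr_ae (Filter.Eventually.of_forall pointwise)]
    have integ : ∀ s2 : S, Integrable (fun ω => (W ω * (if X n ω = s0 then (1:ℝ) else 0)) *
        ((if X (n+j) ω = s2 then (1:ℝ) else 0) * (if X ((n+j)+1) ω = s1 then (1:ℝ) else 0))) ℙ := by
      intro s2
      refine hWd.integrable_mul hmeas ((hWind _ _).mul (hWind _ _)) fun ω => ?_
      rw [abs_mul]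
      exact mul_le_one₀ (hWindb _ _ ω) (abs_nonneg _) (hWindb _ _ ω)
    rw [integral_finset_sum _ (fun s2 _ => integ s2)]
    have step : ∀ s2 : S, ∫ ω, (W ω * (if X n ω = s0 then (1:ℝ) else 0)) *
        ((if X (n+j) ω = s2 then (1:ℝ) else 0) * (if X ((n+j)+1) ω = s1 then (1:ℝ) else 0)) ∂ℙ
        = p s2 s1 * ((p^j) s0 s2 * ∫ ω, W ω * (if X n ω = s0 then (1:ℝ) else 0) ∂ℙ) := by
      intro s2
      obtain ⟨F, hF0⟩ := hWd
      have hF : ∀ ω, W ω * (if X n ω = s0 then (1:ℝ) else 0) = F fun k : Fin (n+j+1) => X k ω :=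
        fun ω => hF0 ω
      have e : ∀ ω, (W ω * (if X n ω = s0 then (1:ℝ) else 0)) *
          ((if X (n+j) ω = s2 then (1:ℝ) else 0) * (if X ((n+j)+1) ω = s1 then (1:ℝ) else 0))
          = F (fun k : Fin (n+j+1) => X k ω) *
            ((if X (n+j) ω = s2 then (1:ℝ) else 0) * (if X ((n+j)+1) ω = s1 then (1:ℝ) else 0)) := by
        intro ω; rw [hF ω]
      rw [integral_congr_ae (Filter.Eventually.of_forall e), core hmeas hMarkov (n+j) F s2 s1]
      have e2 : ∀ ω, F (fun k : Fin (n+j+1) => X k ω) * (if X (n+j) ω = s2 then (1:ℝ) else 0)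
          = (W ω * (if X n ω = s0 then (1:ℝ) else 0)) * (if X (n+j) ω = s2 then (1:ℝ) else 0) := by
        intro ω; rw [← hF ω]
      rw [integral_congr_ae (Filter.Eventually.of_forall e2)]
      have e3 : ∀ ω, (W ω * (if X n ω = s0 then (1:ℝ) else 0)) * (if X (n+j) ω = s2 then (1:ℝ) else 0)
          = W ω * ((if X n ω = s0 then (1:ℝ) else 0) * (if X (n+j) ω = s2 then (1:ℝ) else 0)) := by
        intro ω; ring
      rw [integral_congr_ae (Filter.Eventually.of_forall e3), ih n W hW s0 s2]
    rw [Finset.sum_congr rfl (fun s2 _ => step s2)]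
    rw [pow_succ, Matrix.mul_apply, Finset.sum_mul]
    refine Finset.sum_congr rfl fun s2 _ => ?_
    ring

/-- counting visits -/
def NsF (X : ℕ → Ω → S) (s : S) (t : ℕ) (ω : Ω) : ℕ :=
  ((Finset.range t).filter (fun n => X n ω = s)).card

def DF (X : ℕ → Ω → S) (p : Matrix S S ℝ) (s s' : S) (n : ℕ) (ω : Ω) : ℝ :=
  (if X n ω = s then (1:ℝ) else 0) * (if X (n+1) ω = s' then (1:ℝ) else 0)
    - p s s' * (if X n ω = s then (1:ℝ) else 0)

def cF (X : ℕ → Ω → S) (p : Matrix S S ℝ) (s s' : S) (K n : ℕ) (ω : Ω) : ℝ :=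
  (if NsF X s n ω < K then (1:ℝ) else 0) * DF X p s s' n ω

def MWF (X : ℕ → Ω → S) (p : Matrix S S ℝ) (s s' : S) (K t : ℕ) (ω : Ω) : ℝ :=
  ∑ n ∈ Finset.range t, cF X p s s' K n ω

noncomputable def VF (X : ℕ → Ω → S) (p : Matrix S S ℝ) (s s' : S) (K : ℕ) (ω : Ω) : ℝ :=
  ∑' n, cF X p s s' K n ω

section Facts
variable (s s' : S)
variable (hpnn : ∀ a b, 0 ≤ p a b) (hprow : ∀ a, ∑ b, p a b = 1)

include hpnn hprow in
lemma p_le_one : p s s' ≤ 1 := by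
  rw [← hprow s]
  exact Finset.single_le_sum (f := fun i => p s i) (fun i _ => hpnn s i) (Finset.mem_univ s')

lemma DF_zero {n : ℕ} {ω : Ω} (h : X n ω ≠ s) : DF X p s s' n ω = 0 := by
  simp [DF, h]

lemma DF_abs (hpnn : ∀ a b, 0 ≤ p a b) (hprow : ∀ a, ∑ b, p a b = 1) (n : ℕ) (ω : Ω) :
    |DF X p s s' n ω| ≤ 1 := by
  have h0 := hpnn s s'
  have h1 := p_le_one s s' hpnn hprow
  by_cases hs : X n ω = s
  · by_cases hs' : X (n+1) ω = s'
    · have he : DF X p s s' n ω = 1 - p s s' := by simp [DF, hs, hs']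
      rw [he, abs_le]; constructor <;> linarith
    · have he : DF X p s s' n ω = -(p s s') := by simp [DF, hs, hs']
      rw [he, abs_neg, abs_le]; constructor <;> linarith
  · have he : DF X p s s' n ω = 0 := DF_zero s s' hs
    rw [he, abs_zero]; exact zero_le_one

lemma Ns_mono (ω : Ω) {n t : ℕ} (h : n ≤ t) : NsF X s n ω ≤ NsF X s t ω :=
  Finset.card_le_card (Finset.filter_subset_filter _ (Finset.range_subset_range.2 h))

lemma Ns_succ {n : ℕ} {ω : Ω} (h : X n ω = s) : NsF X s (n+1) ω = NsF X s n ω + 1 := by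
  unfold NsF
  rw [Finset.range_add_one, Finset.filter_insert, if_pos h,
    Finset.card_insert_of_notMem (by simp)]

lemma Ns_lt {n t : ℕ} {ω : Ω} (hnt : n < t) (h : X n ω = s) :
    NsF X s n ω < NsF X s t ω :=
  lt_of_lt_of_le (by rw [Ns_succ s h]; exact Nat.lt_succ_self _) (Ns_mono s ω hnt)

lemma sum_ind_le {K' K : ℕ} (hKK : K' ≤ K) (t : ℕ) (ω : Ω) :
    ∑ n ∈ Finset.range t,
      (if X n ω = s ∧ K' ≤ NsF X s n ω ∧ NsF X s n ω < K then (1:ℝ) else 0)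
      ≤ (K : ℝ) - K' := by
  rw [Finset.sum_boole]
  have hcard : ((Finset.range t).filter
      (fun n => X n ω = s ∧ K' ≤ NsF X s n ω ∧ NsF X s n ω < K)).card ≤ K - K' := by
    have := Finset.card_le_card_of_injOn
      (s := (Finset.range t).filter
        (fun n => X n ω = s ∧ K' ≤ NsF X s n ω ∧ NsF X s n ω < K))
      (t := Finset.Ico K' K) (fun n => NsF X s n ω)
      (fun n hn => by
        simp only [Finset.coe_filter, Finset.mem_filter, Set.mem_setOf_eq, Finset.mem_coe] at hn ⊢
        exact Finset.mem_Ico.2 ⟨hn.2.2.1, hn.2.2.2⟩)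
      (fun a ha b hb hab => by
        simp only [Finset.coe_filter, Set.mem_setOf_eq] at ha hb
        rcases lt_trichotomy a b with h | h | h
        · exact absurd hab (ne_of_lt (Ns_lt s h ha.2.1))
        · exact h
        · exact absurd hab.symm (ne_of_lt (Ns_lt s h hb.2.1)))
    simpa using this
  calc (((Finset.range t).filter _).card : ℝ) ≤ ((K - K' : ℕ) : ℝ) := by exact_mod_cast hcard
    _ = (K : ℝ) - K' := by rw [Nat.cast_sub hKK]

lemma cF_zeroK (n : ℕ) (ω : Ω) : cF X p s s' 0 n ω = 0 := by
  simp [cF]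

include hpnn hprow in
lemma cdiff_abs {K' K : ℕ} (hKK : K' ≤ K) (n : ℕ) (ω : Ω) :
    |cF X p s s' K n ω - cF X p s s' K' n ω|
      ≤ (if X n ω = s ∧ K' ≤ NsF X s n ω ∧ NsF X s n ω < K then (1:ℝ) else 0) := by
  have hnn : (0:ℝ) ≤ if X n ω = s ∧ K' ≤ NsF X s n ω ∧ NsF X s n ω < K then (1:ℝ) else 0 := by
    split <;> norm_num
  by_cases hs : X n ω = s
  · by_cases h1 : NsF X s n ω < K'
    · have h2 : NsF X s n ω < K := lt_of_lt_of_le h1 hKK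
      have he : cF X p s s' K n ω - cF X p s s' K' n ω = 0 := by simp [cF, h1, h2]
      rw [he, abs_zero]; exact hnn
    · by_cases h2 : NsF X s n ω < K
      · rw [if_pos ⟨hs, not_lt.1 h1, h2⟩]
        have he : cF X p s s' K n ω - cF X p s s' K' n ω = DF X p s s' n ω := by
          simp [cF, h1, h2]
        rw [he]; exact DF_abs s s' hpnn hprow n ω
      · have he : cF X p s s' K n ω - cF X p s s' K' n ω = 0 := by simp [cF, h1, h2]
        rw [he, abs_zero]; exact hnn
  · have he : ∀ K'' : ℕ, cF X p s s' K'' n ω = 0 := fun K'' => by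
      simp [cF, DF_zero s s' hs]
    rw [he K, he K', sub_zero, abs_zero]; exact hnn

include hpnn hprow in
lemma cF_abs (K n : ℕ) (ω : Ω) :
    |cF X p s s' K n ω| ≤ (if X n ω = s ∧ 0 ≤ NsF X s n ω ∧ NsF X s n ω < K then (1:ℝ) else 0) := by
  have := cdiff_abs s s' (X := X) (p := p) hpnn hprow (Nat.zero_le K) n ω
  rwa [cF_zeroK, sub_zero] at this

include hpnn hprow in
lemma sum_abs_cF_le (K t : ℕ) (ω : Ω) :
    ∑ n ∈ Finset.range t, |cF X p s s' K n ω| ≤ (K : ℝ) := by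
  calc ∑ n ∈ Finset.range t, |cF X p s s' K n ω|
      ≤ ∑ n ∈ Finset.range t,
        (if X n ω = s ∧ 0 ≤ NsF X s n ω ∧ NsF X s n ω < K then (1:ℝ) else 0) :=
        Finset.sum_le_sum fun n _ => cF_abs s s' hpnn hprow K n ω
    _ ≤ (K : ℝ) - (0:ℕ) := sum_ind_le s (Nat.zero_le K) t ω
    _ = (K : ℝ) := by simp

include hpnn hprow in
lemma summable_cF (K : ℕ) (ω : Ω) : Summable (fun n => cF X p s s' K n ω) :=
  Summable.of_abs (summable_of_sum_range_le (fun n => abs_nonneg _)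
    (fun t => sum_abs_cF_le s s' hpnn hprow K t ω))

include hpnn hprow in
lemma MWF_tendsto (K : ℕ) (ω : Ω) :
    Tendsto (fun t => MWF X p s s' K t ω) atTop (nhds (VF X p s s' K ω)) :=
  (summable_cF s s' hpnn hprow K ω).hasSum.tendsto_sum_nat

include hpnn hprow in
lemma MWF_abs (K t : ℕ) (ω : Ω) : |MWF X p s s' K t ω| ≤ (K : ℝ) :=
  (Finset.abs_sum_le_sum_abs _ _).trans (sum_abs_cF_le s s' hpnn hprow K t ω)

lemma abs_tsum_le {f : ℕ → ℝ} (hf : Summable f) {C : ℝ}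
    (h : ∀ t, |∑ n ∈ Finset.range t, f n| ≤ C) : |∑' n, f n| ≤ C :=
  le_of_tendsto hf.hasSum.tendsto_sum_nat.abs (Filter.Eventually.of_forall h)

include hpnn hprow in
lemma VF_sub_abs {K' K : ℕ} (hKK : K' ≤ K) (ω : Ω) :
    |VF X p s s' K ω - VF X p s s' K' ω| ≤ (K : ℝ) - K' := by
  have hK := summable_cF s s' (X := X) (p := p) hpnn hprow K ω
  have hK' := summable_cF s s' (X := X) (p := p) hpnn hprow K' ω
  rw [VF, VF, ← Summable.tsum_sub hK hK']
  refine abs_tsum_le (hK.sub hK') fun t => ?_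
  calc |∑ n ∈ Finset.range t, (cF X p s s' K n ω - cF X p s s' K' n ω)|
      ≤ ∑ n ∈ Finset.range t, |cF X p s s' K n ω - cF X p s s' K' n ω| :=
        Finset.abs_sum_le_sum_abs _ _
    _ ≤ ∑ n ∈ Finset.range t,
        (if X n ω = s ∧ K' ≤ NsF X s n ω ∧ NsF X s n ω < K then (1:ℝ) else 0) :=
        Finset.sum_le_sum fun n _ => cdiff_abs s s' hpnn hprow hKK n ω
    _ ≤ (K : ℝ) - K' := sum_ind_le s hKK t ω

lemma VF_zeroK (ω : Ω) : VF X p s s' 0 ω = 0 := by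
  simp [VF, cF_zeroK]

include hpnn hprow in
lemma VF_abs (K : ℕ) (ω : Ω) : |VF X p s s' K ω| ≤ (K : ℝ) := by
  have := VF_sub_abs s s' (X := X) (p := p) hpnn hprow (Nat.zero_le K) ω
  rwa [VF_zeroK, sub_zero, Nat.cast_zero, sub_zero] at this

lemma VF_eq_M (t : ℕ) (ω : Ω) :
    VF X p s s' (NsF X s t ω) ω = ∑ n ∈ Finset.range t, DF X p s s' n ω := by
  rw [VF, tsum_eq_sum (s := Finset.range t) (fun n hn => by
    by_cases hs : X n ω = s
    · have hnt : ¬ NsF X s n ω < NsF X s t ω :=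
        not_lt.2 (Ns_mono s ω (not_lt.1 fun hc => hn (Finset.mem_range.2 hc)))
      simp [cF, hnt]
    · simp [cF, DF_zero s s' hs])]
  refine Finset.sum_congr rfl fun n hn => ?_
  by_cases hs : X n ω = s
  · rw [cF, if_pos (Ns_lt s (Finset.mem_range.1 hn) hs), one_mul]
  · simp [cF, DF_zero s s' hs]

end Facts

section Moment
variable (s s' : S)

lemma Det.abs' {n : ℕ} {W : Ω → ℝ} (h : Det X n W) : Det X n (fun ω => |W ω|) := by
  obtain ⟨F, hF⟩ := h
  exact ⟨fun g => |F g|, fun ω => by show |W ω| = |F _|; rw [hF]⟩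

lemma Det.pow' {n : ℕ} {W : Ω → ℝ} (h : Det X n W) (m : ℕ) : Det X n (fun ω => W ω ^ m) := by
  obtain ⟨F, hF⟩ := h
  exact ⟨fun g => F g ^ m, fun ω => by show W ω ^ m = F _ ^ m; rw [hF]⟩

lemma Det.add' {n : ℕ} {W W' : Ω → ℝ} (h : Det X n W) (h' : Det X n W') :
    Det X n (fun ω => W ω + W' ω) := by
  obtain ⟨F, hF⟩ := h; obtain ⟨F', hF'⟩ := h'
  exact ⟨fun g => F g + F' g, fun ω => by show W ω + W' ω = F _ + F' _; rw [hF, hF']⟩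

lemma Det.cmul {n : ℕ} {W : Ω → ℝ} (h : Det X n W) (c : ℝ) :
    Det X n (fun ω => c * W ω) := by
  obtain ⟨F, hF⟩ := h
  exact ⟨fun g => c * F g, fun ω => by show c * W ω = c * F _; rw [hF]⟩

lemma Det.ext' {n : ℕ} {W : Ω → ℝ} (h : Det X n W) {ω₁ ω₂ : Ω}
    (hX : ∀ k, k ≤ n → X k ω₁ = X k ω₂) : W ω₁ = W ω₂ := by
  obtain ⟨F, hF⟩ := h
  rw [hF, hF]
  congr 1
  funext k
  exact hX k (Nat.le_of_lt_succ k.2)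

lemma Ns_ext {t : ℕ} {ω₁ ω₂ : Ω} (hX : ∀ k, k < t → X k ω₁ = X k ω₂) :
    NsF X s t ω₁ = NsF X s t ω₂ := by
  unfold NsF
  congr 1
  refine Finset.filter_congr fun k hk => ?_
  rw [hX k (Finset.mem_range.1 hk)]

lemma det_w (t n K : ℕ) (h : t ≤ n + 1) :
    Det X n (fun ω => if NsF X s t ω < K then (1:ℝ) else 0) :=
  det_of_ext fun ω₁ ω₂ hX => by
    rw [Ns_ext s fun k hk => hX k (by omega)]

lemma det_cF (K k n : ℕ) (h : k + 1 ≤ n) : Det X n (cF X p s s' K k) := by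
  refine det_of_ext fun ω₁ ω₂ hX => ?_
  unfold cF DF
  rw [Ns_ext s fun j hj => hX j (by omega), hX k (by omega), hX (k+1) h]

lemma det_MWF (K t : ℕ) : Det X t (MWF X p s s' K t) :=
  det_of_ext fun ω₁ ω₂ hX => Finset.sum_congr rfl fun n hn =>
    (det_cF s s' K n t (Finset.mem_range.1 hn)).ext' hX

lemma cF_le_one (hpnn : ∀ a b, 0 ≤ p a b) (hprow : ∀ a, ∑ b, p a b = 1) (K n : ℕ) (ω : Ω) :
    |cF X p s s' K n ω| ≤ 1 := by
  refine (cF_abs s s' (X := X) (p := p) hpnn hprow K n ω).trans ?_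
  split <;> norm_num

lemma meas_ind (hmeas : ∀ n, Measurable (X n)) (k : ℕ) (a : S) :
    Measurable (fun ω => if X k ω = a then (1:ℝ) else 0) :=
  Measurable.ite (meas_eq hmeas k a) measurable_const measurable_const

lemma meas_DF (hmeas : ∀ n, Measurable (X n)) (n : ℕ) :
    Measurable (DF X p s s' n) := by
  unfold DF
  exact ((meas_ind hmeas n s).mul (meas_ind hmeas (n+1) s')).sub
    ((meas_ind hmeas n s).const_mul _)

lemma meas_NsSet (hmeas : ∀ n, Measurable (X n)) (t K : ℕ) :
    MeasurableSet {ω | NsF X s t ω < K} := by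
  have hNs : Measurable (fun ω => NsF X s t ω) := by
    have he : (fun ω => NsF X s t ω)
        = fun ω => ∑ n ∈ Finset.range t, if X n ω = s then 1 else 0 :=
      funext fun ω => by rw [NsF, Finset.card_filter]
    rw [he]
    exact Finset.measurable_sum _ fun n _ =>
      Measurable.ite (meas_eq hmeas n s) measurable_const measurable_const
  have : {ω | NsF X s t ω < K} = (fun ω => NsF X s t ω) ⁻¹' {x | x < K} := rfl
  rw [this]
  exact hNs ((Set.to_countable _).measurableSet)

lemma meas_cF (hmeas : ∀ n, Measurable (X n)) (K n : ℕ) :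
    Measurable (cF X p s s' K n) := by
  unfold cF
  exact (Measurable.ite (meas_NsSet s hmeas n K) measurable_const measurable_const).mul
    (meas_DF s s' hmeas n)

lemma meas_MWF (hmeas : ∀ n, Measurable (X n)) (K t : ℕ) :
    Measurable (MWF X p s s' K t) :=
  Finset.measurable_sum _ fun n _ => meas_cF s s' hmeas K n

/-- orthogonality: expectations against the martingale difference vanish -/
lemma lemA (hmeas : ∀ n, Measurable (X n))
    (hMarkov : ∀ (n : ℕ) (f : Fin n → S) (s s' : S),
      (ℙ {ω | (∀ k : Fin n, X k ω = f k) ∧ X n ω = s ∧ X (n + 1) ω = s'}).toReal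
        = p s s' * (ℙ {ω | (∀ k : Fin n, X k ω = f k) ∧ X n ω = s}).toReal)
    {n : ℕ} {W : Ω → ℝ} (hW : Det X n W) :
    ∫ ω, W ω * DF X p s s' n ω ∂ℙ = 0 := by
  obtain ⟨F, hF⟩ := hW
  have hWd : Det X n W := ⟨F, hF⟩
  have hindb : ∀ (k : ℕ) (a : S) (ω : Ω), |if X k ω = a then (1:ℝ) else 0| ≤ 1 := by
    intro k a ω; by_cases h : X k ω = a <;> simp [h]
  have hint1 : Integrable (fun ω => W ω *
      ((if X n ω = s then (1:ℝ) else 0) * (if X (n+1) ω = s' then (1:ℝ) else 0))) ℙ := by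
    refine hWd.integrable_mul hmeas ((meas_ind hmeas n s).mul (meas_ind hmeas (n+1) s'))
      fun ω => ?_
    rw [abs_mul]
    exact mul_le_one₀ (hindb n s ω) (abs_nonneg _) (hindb (n+1) s' ω)
  have hint2 : Integrable (fun ω => W ω * (if X n ω = s then (1:ℝ) else 0)) ℙ :=
    hWd.integrable_mul hmeas (meas_ind hmeas n s) (hindb n s)
  have point : ∀ ω, W ω * DF X p s s' n ω
      = W ω * ((if X n ω = s then (1:ℝ) else 0) * (if X (n+1) ω = s' then (1:ℝ) else 0))
        - p s s' * (W ω * (if X n ω = s then (1:ℝ) else 0)) := by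
    intro ω; unfold DF; ring
  rw [integral_congr_ae (Filter.Eventually.of_forall point),
    integral_sub hint1 (hint2.const_mul _), integral_const_mul]
  have e1 : ∀ ω, W ω *
      ((if X n ω = s then (1:ℝ) else 0) * (if X (n+1) ω = s' then (1:ℝ) else 0))
      = F (fun k : Fin (n+1) => X k ω) *
        ((if X n ω = s then (1:ℝ) else 0) * (if X (n+1) ω = s' then (1:ℝ) else 0)) := by
    intro ω; rw [hF]
  have e2 : ∀ ω, W ω * (if X n ω = s then (1:ℝ) else 0)
      = F (fun k : Fin (n+1) => X k ω) * (if X n ω = s then (1:ℝ) else 0) := by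
    intro ω; rw [hF]
  rw [integral_congr_ae (Filter.Eventually.of_forall e1),
    integral_congr_ae (Filter.Eventually.of_forall e2),
    core hmeas hMarkov n F s s']
  ring

lemma poly_bound {a b CK : ℝ} (ha : |a| ≤ CK) (hb : |b| ≤ 1) :
    6*(a^2*b^2) + (4*(a*b^3) + b^4) ≤ (6*CK^2 + 4*CK + 1) * |b| := by
  have hb0 : (0:ℝ) ≤ |b| := abs_nonneg b
  have ha0 : (0:ℝ) ≤ CK := (abs_nonneg a).trans ha
  have hb2 : b^2 ≤ |b| := by nlinarith [sq_abs b]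
  have ha2 : a^2 ≤ CK^2 := by
    calc a^2 = |a|^2 := (sq_abs a).symm
      _ ≤ CK^2 := pow_le_pow_left₀ (abs_nonneg a) ha 2
  have h1 : a^2*b^2 ≤ CK^2 * |b| := by nlinarith [sq_nonneg a, sq_nonneg b]
  have h3 : a*b^3 ≤ CK * |b| := by
    have : a*b^3 ≤ |a*b^3| := le_abs_self _
    have h4 : |a*b^3| = |a| * |b|^3 := by rw [abs_mul, abs_pow]
    have h5 : |b|^3 ≤ |b| := by nlinarith [sq_abs b]
    nlinarith [abs_nonneg a]
  have h6 : b^4 ≤ |b| := by nlinarith [sq_abs b, sq_nonneg b, sq_nonneg (b^2)]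
  nlinarith

lemma moment (hmeas : ∀ n, Measurable (X n))
    (hMarkov : ∀ (n : ℕ) (f : Fin n → S) (s s' : S),
      (ℙ {ω | (∀ k : Fin n, X k ω = f k) ∧ X n ω = s ∧ X (n + 1) ω = s'}).toReal
        = p s s' * (ℙ {ω | (∀ k : Fin n, X k ω = f k) ∧ X n ω = s}).toReal)
    (hpnn : ∀ a b, 0 ≤ p a b) (hprow : ∀ a, ∑ b, p a b = 1)
    (K : ℕ) (t : ℕ) :
    ∫ ω, (MWF X p s s' K t ω)^4 ∂ℙ
      ≤ (6*(K:ℝ)^2 + 4*K + 1) * ∑ n ∈ Finset.range t, ∫ ω, |cF X p s s' K n ω| ∂ℙ := by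
  induction t with
  | zero => simp [MWF]
  | succ t ih =>
    have hdet_a : Det X t (MWF X p s s' K t) := det_MWF s s' K t
    have hdet_a' : Det X (t+1) (MWF X p s s' K t) := hdet_a.mono (Nat.le_succ t)
    have hdet_b : Det X (t+1) (cF X p s s' K t) := det_cF s s' K t (t+1) le_rfl
    have habs_a : ∀ ω, |MWF X p s s' K t ω| ≤ (K:ℝ) := MWF_abs s s' hpnn hprow K t
    have habs_b : ∀ ω, |cF X p s s' K t ω| ≤ 1 := cF_le_one s s' hpnn hprow K t
    set a := MWF X p s s' K t with ha
    set b := cF X p s s' K t with hb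
    have point : ∀ ω, (MWF X p s s' K (t+1) ω)^4
        = (a ω)^4 + 4*((a ω)^3 * b ω)
          + (6*((a ω)^2*(b ω)^2) + (4*((a ω)*(b ω)^3) + (b ω)^4)) := by
      intro ω
      rw [MWF, Finset.sum_range_succ, ← MWF, ← ha, ← hb]
      ring
    have int_a4 : Integrable (fun ω => (a ω)^4) ℙ := (hdet_a.pow' 4).integrable hmeas
    have int_a3b : Integrable (fun ω => (a ω)^3 * b ω) ℙ :=
      ((hdet_a'.pow' 3).mul hdet_b).integrable hmeas
    have hdet_R : Det X (t+1) (fun ω => 6*((a ω)^2*(b ω)^2) + (4*((a ω)*(b ω)^3) + (b ω)^4)) :=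
      (((hdet_a'.pow' 2).mul (hdet_b.pow' 2)).cmul 6).add'
        (((hdet_a'.mul (hdet_b.pow' 3)).cmul 4).add' (hdet_b.pow' 4))
    have int_R : Integrable (fun ω => 6*((a ω)^2*(b ω)^2) + (4*((a ω)*(b ω)^3) + (b ω)^4)) ℙ :=
      hdet_R.integrable hmeas
    have int_absb : Integrable (fun ω => |b ω|) ℙ := hdet_b.abs'.integrable hmeas
    have int_43 : Integrable (fun ω => 4*((a ω)^3 * b ω)) ℙ := by
      exact int_a3b.const_mul 4
    have int_sum : Integrable (fun ω => (a ω)^4 + 4*((a ω)^3 * b ω)) ℙ := by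
      exact int_a4.add int_43
    rw [integral_congr_ae (Filter.Eventually.of_forall point)]
    rw [integral_add int_sum int_R, integral_add int_a4 int_43, integral_const_mul]
    -- middle term vanishes
    have key : ∫ ω, (a ω)^3 * b ω ∂ℙ = 0 := by
      have pw : ∀ ω, (a ω)^3 * b ω
          = ((a ω)^3 * (if NsF X s t ω < K then (1:ℝ) else 0)) * DF X p s s' t ω := by
        intro ω; rw [hb]; unfold cF; ring
      rw [integral_congr_ae (Filter.Eventually.of_forall pw)]
      exact lemA s s' hmeas hMarkov ((hdet_a.pow' 3).mul (det_w s t t K (Nat.le_succ t)))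
    rw [key, mul_zero, add_zero]
    -- bound the remainder
    have hR : ∫ ω, (6*((a ω)^2*(b ω)^2) + (4*((a ω)*(b ω)^3) + (b ω)^4)) ∂ℙ
        ≤ (6*(K:ℝ)^2 + 4*K + 1) * ∫ ω, |b ω| ∂ℙ := by
      rw [← integral_const_mul]
      exact integral_mono int_R (int_absb.const_mul _)
        (fun ω => poly_bound (habs_a ω) (habs_b ω))
    rw [Finset.sum_range_succ, mul_add]
    exact add_le_add ih hR

lemma moment' (hmeas : ∀ n, Measurable (X n))
    (hMarkov : ∀ (n : ℕ) (f : Fin n → S) (s s' : S),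
      (ℙ {ω | (∀ k : Fin n, X k ω = f k) ∧ X n ω = s ∧ X (n + 1) ω = s'}).toReal
        = p s s' * (ℙ {ω | (∀ k : Fin n, X k ω = f k) ∧ X n ω = s}).toReal)
    (hpnn : ∀ a b, 0 ≤ p a b) (hprow : ∀ a, ∑ b, p a b = 1)
    (K : ℕ) (t : ℕ) :
    ∫ ω, (MWF X p s s' K t ω)^4 ∂ℙ ≤ (6*(K:ℝ)^2 + 4*K + 1) * K := by
  refine (moment s s' hmeas hMarkov hpnn hprow K t).trans ?_
  have hCB : (0:ℝ) ≤ 6*(K:ℝ)^2 + 4*K + 1 := by positivity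
  refine mul_le_mul_of_nonneg_left ?_ hCB
  have int_abs : ∀ n, Integrable (fun ω => |cF X p s s' K n ω|) ℙ :=
    fun n => ((det_cF s s' K n (n+1) le_rfl).abs').integrable hmeas
  rw [← integral_finset_sum _ (fun n _ => int_abs n)]
  calc ∫ ω, ∑ n ∈ Finset.range t, |cF X p s s' K n ω| ∂ℙ
      ≤ ∫ _ω, (K:ℝ) ∂ℙ := integral_mono (integrable_finset_sum _ (fun n _ => int_abs n))
        (integrable_const _) (fun ω => sum_abs_cF_le s s' hpnn hprow K t ω)
    _ = (K:ℝ) := by simp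

lemma meas_VF (hmeas : ∀ n, Measurable (X n))
    (hpnn : ∀ a b, 0 ≤ p a b) (hprow : ∀ a, ∑ b, p a b = 1) (K : ℕ) :
    Measurable (VF X p s s' K) :=
  measurable_of_tendsto_metrizable (fun t => meas_MWF s s' hmeas K t)
    (tendsto_pi_nhds.2 fun ω => MWF_tendsto s s' hpnn hprow K ω)

lemma int_VF4 (hmeas : ∀ n, Measurable (X n))
    (hMarkov : ∀ (n : ℕ) (f : Fin n → S) (s s' : S),
      (ℙ {ω | (∀ k : Fin n, X k ω = f k) ∧ X n ω = s ∧ X (n + 1) ω = s'}).toReal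
        = p s s' * (ℙ {ω | (∀ k : Fin n, X k ω = f k) ∧ X n ω = s}).toReal)
    (hpnn : ∀ a b, 0 ≤ p a b) (hprow : ∀ a, ∑ b, p a b = 1)
    (K : ℕ) :
    ∫ ω, (VF X p s s' K ω)^4 ∂ℙ ≤ (6*(K:ℝ)^2 + 4*K + 1) * K := by
  have hlim : Tendsto (fun t => ∫ ω, (MWF X p s s' K t ω)^4 ∂ℙ) atTop
      (nhds (∫ ω, (VF X p s s' K ω)^4 ∂ℙ)) := by
    refine tendsto_integral_of_dominated_convergence (fun _ => (K:ℝ)^4)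
      (fun t => ((meas_MWF s s' hmeas K t).pow measurable_const).aestronglyMeasurable)
      (integrable_const _) (fun t => Filter.Eventually.of_forall fun ω => ?_)
      (Filter.Eventually.of_forall fun ω => ?_)
    · rw [Real.norm_eq_abs, abs_pow]
      exact pow_le_pow_left₀ (abs_nonneg _) (MWF_abs s s' hpnn hprow K t ω) 4
    · exact (MWF_tendsto s s' hpnn hprow K ω).pow 4
  exact le_of_tendsto hlim (Filter.Eventually.of_forall
    (fun t => moment' s s' hmeas hMarkov hpnn hprow K t))

end Moment
section AS
variable (s s' : S)

lemma sqrt_tendsto : Tendsto Nat.sqrt atTop atTop :=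
  tendsto_atTop_atTop_of_monotone (fun _ _ h => Nat.sqrt_le_sqrt h)
    (fun b => ⟨b^2, (Nat.sqrt_eq' b).ge⟩)

lemma subseq_to_all (v : ℕ → ℝ)
    (hdiff : ∀ K' K : ℕ, K' ≤ K → |v K - v K'| ≤ (K:ℝ) - K')
    (hsub : Tendsto (fun j : ℕ => |v (j^2)| / ((j:ℝ)^2)) atTop (nhds 0)) :
    Tendsto (fun K => v K / K) atTop (nhds 0) := by
  have key : ∀ K : ℕ, 1 ≤ K →
      ‖v K / K‖ ≤ |v ((Nat.sqrt K)^2)| / ((Nat.sqrt K : ℝ)^2) + 3 / (Nat.sqrt K : ℝ) := by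
    intro K hK
    set j := Nat.sqrt K with hj
    have hj1 : 1 ≤ j := (Nat.sqrt_pos.2 hK)
    have hj2 : j^2 ≤ K := Nat.sqrt_le' K
    have hj3 : K < (j+1)^2 := Nat.lt_succ_sqrt' K
    have hjR : (1:ℝ) ≤ (j:ℝ) := by exact_mod_cast hj1
    have hjR0 : (0:ℝ) < (j:ℝ) := lt_of_lt_of_le zero_lt_one hjR
    have hj2R : ((j:ℝ))^2 ≤ (K:ℝ) := by exact_mod_cast hj2
    have hKR0 : (0:ℝ) < (K:ℝ) := lt_of_lt_of_le (by positivity) hj2R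
    have h1 : |v K| ≤ |v (j^2)| + ((K:ℝ) - (j:ℝ)^2) := by
      have := hdiff (j^2) K hj2
      have habs : |v K| ≤ |v (j^2)| + |v K - v (j^2)| := by
        calc |v K| = |v (j^2) + (v K - v (j^2))| := by ring_nf
          _ ≤ |v (j^2)| + |v K - v (j^2)| := abs_add_le _ _
      have hcast : ((j^2 : ℕ) : ℝ) = (j:ℝ)^2 := by push_cast; ring
      rw [hcast] at this
      linarith
    have h2 : (K:ℝ) - (j:ℝ)^2 ≤ 3*(j:ℝ) := by
      have : (K:ℝ) < ((j:ℝ)+1)^2 := by exact_mod_cast hj3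
      nlinarith
    rw [Real.norm_eq_abs, abs_div, abs_of_pos hKR0]
    calc |v K| / (K:ℝ) ≤ (|v (j^2)| + 3*(j:ℝ)) / (K:ℝ) := by
          gcongr
          linarith
      _ = |v (j^2)| / (K:ℝ) + (3*(j:ℝ)) / (K:ℝ) := add_div _ _ _
      _ ≤ |v (j^2)| / ((j:ℝ)^2) + (3*(j:ℝ)) / ((j:ℝ)^2) := by
          refine add_le_add ?_ ?_ <;>
            exact div_le_div_of_nonneg_left (by positivity) (by positivity) hj2R
      _ = |v (j^2)| / ((j:ℝ)^2) + 3 / (j:ℝ) := by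
          congr 1
          rw [sq, mul_div_mul_right _ _ (ne_of_gt hjR0)]
  refine squeeze_zero_norm' (eventually_atTop.2 ⟨1, key⟩) ?_
  have hlim : Tendsto (fun K : ℕ => |v ((Nat.sqrt K)^2)| / ((Nat.sqrt K : ℝ)^2)
      + 3 / (Nat.sqrt K : ℝ)) atTop (nhds (0 + 0)) :=
    Tendsto.add (hsub.comp sqrt_tendsto)
      ((tendsto_const_div_atTop_nhds_zero_nat 3).comp sqrt_tendsto)
  simpa using hlim

lemma as_subseq (hmeas : ∀ n, Measurable (X n))
    (hMarkov : ∀ (n : ℕ) (f : Fin n → S) (s s' : S),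
      (ℙ {ω | (∀ k : Fin n, X k ω = f k) ∧ X n ω = s ∧ X (n + 1) ω = s'}).toReal
        = p s s' * (ℙ {ω | (∀ k : Fin n, X k ω = f k) ∧ X n ω = s}).toReal)
    (hpnn : ∀ a b, 0 ≤ p a b) (hprow : ∀ a, ∑ b, p a b = 1) :
    ∀ᵐ ω ∂ℙ, Tendsto (fun j : ℕ => |VF X p s s' (j^2) ω| / ((j:ℝ)^2)) atTop (nhds 0) := by
  set g : ℕ → Ω → ℝ := fun j ω => (VF X p s s' (j^2) ω)^4 / (j:ℝ)^8 with hg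
  have hVabs : ∀ (j : ℕ) (ω : Ω), |VF X p s s' (j^2) ω| ≤ ((j:ℝ))^2 := by
    intro j ω
    have := VF_abs s s' (X := X) (p := p) hpnn hprow (j^2) ω
    have hcast : ((j^2 : ℕ) : ℝ) = (j:ℝ)^2 := by push_cast; ring
    rwa [hcast] at this
  have hgnn : ∀ (j : ℕ) (ω : Ω), 0 ≤ g j ω := by
    intro j ω
    have h4 : (0:ℝ) ≤ (VF X p s s' (j^2) ω)^4 := by positivity
    positivity
  have hmeasg : ∀ j, Measurable (g j) := fun j =>
    ((meas_VF s s' hmeas hpnn hprow (j^2)).pow measurable_const).div_const _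
  have hgb : ∀ (j : ℕ) (ω : Ω), g j ω ≤ 1 := by
    intro j ω
    rcases Nat.eq_zero_or_pos j with hj | hj
    · subst hj; simp [hg]
    · have hjR : (0:ℝ) < (j:ℝ) := by exact_mod_cast hj
      have h1 : (VF X p s s' (j^2) ω)^4 ≤ ((j:ℝ)^2)^4 := by
        calc (VF X p s s' (j^2) ω)^4 = |VF X p s s' (j^2) ω|^4 := by
              rw [← abs_pow, abs_of_nonneg (by positivity)]
          _ ≤ ((j:ℝ)^2)^4 := pow_le_pow_left₀ (abs_nonneg _) (hVabs j ω) 4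
      rw [hg]
      have h2 : ((j:ℝ)^2)^4 = (j:ℝ)^8 := by ring
      rw [div_le_one (by positivity)]
      rw [h2] at h1; exact h1
  have hintg : ∀ j, Integrable (g j) ℙ := by
    intro j
    refine Integrable.mono' (integrable_const 1) (hmeasg j).aestronglyMeasurable
      (Filter.Eventually.of_forall fun ω => ?_)
    rw [Real.norm_eq_abs, abs_of_nonneg (hgnn j ω)]
    exact hgb j ω
  have hEg : ∀ j : ℕ, ∫ ω, g j ω ∂ℙ ≤ 11 / (j:ℝ)^2 := by
    intro j
    rcases Nat.eq_zero_or_pos j with hj | hj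
    · subst hj
      simp only [hg, Nat.cast_zero]
      norm_num
    · have hjR : (0:ℝ) < (j:ℝ) := by exact_mod_cast hj
      have hjR1 : (1:ℝ) ≤ (j:ℝ) := by exact_mod_cast hj
      have hV4 := int_VF4 s s' hmeas hMarkov hpnn hprow (j^2)
      have hcast : ((j^2 : ℕ) : ℝ) = (j:ℝ)^2 := by push_cast; ring
      rw [hcast] at hV4
      have hb : (6*((j:ℝ)^2)^2 + 4*(j:ℝ)^2 + 1) * (j:ℝ)^2 ≤ 11 * (j:ℝ)^6 := by
        have e1 : (j:ℝ)^2 ≤ (j:ℝ)^6 := pow_le_pow_right₀ hjR1 (by norm_num)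
        have e2 : (j:ℝ)^4 ≤ (j:ℝ)^6 := pow_le_pow_right₀ hjR1 (by norm_num)
        nlinarith [e1, e2]
      have hC : ∫ ω, (VF X p s s' (j^2) ω)^4 ∂ℙ ≤ 11 * (j:ℝ)^6 := le_trans hV4 hb
      rw [hg]
      simp only
      rw [integral_div]
      rw [div_le_div_iff₀ (by positivity) (by positivity)]
      nlinarith [hC]
  have hsummable : Summable (fun j : ℕ => 11 / ((j:ℝ)^2)) := by
    have := (Real.summable_one_div_nat_pow (p := 2)).2 one_lt_two
    have h2 := this.mul_left 11
    refine h2.congr fun j => ?_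
    rw [mul_one_div]
  have hlint : ∫⁻ ω, ∑' j, ENNReal.ofReal (g j ω) ∂ℙ < ⊤ := by
    rw [lintegral_tsum (fun j => ((hmeasg j).ennreal_ofReal).aemeasurable)]
    have heq : ∀ j : ℕ, ∫⁻ ω, ENNReal.ofReal (g j ω) ∂ℙ = ENNReal.ofReal (∫ ω, g j ω ∂ℙ) :=
      fun j => (ofReal_integral_eq_lintegral_ofReal (hintg j)
        (Filter.Eventually.of_forall (hgnn j))).symm
    calc ∑' j, ∫⁻ ω, ENNReal.ofReal (g j ω) ∂ℙ
        = ∑' j, ENNReal.ofReal (∫ ω, g j ω ∂ℙ) := by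
          exact tsum_congr heq
      _ ≤ ∑' j : ℕ, ENNReal.ofReal (11 / ((j:ℝ)^2)) :=
          ENNReal.tsum_le_tsum fun j => ENNReal.ofReal_le_ofReal (hEg j)
      _ = ENNReal.ofReal (∑' j : ℕ, 11 / ((j:ℝ)^2)) :=
          (ENNReal.ofReal_tsum_of_nonneg (fun j => by positivity) hsummable).symm
      _ < ⊤ := ENNReal.ofReal_lt_top
  have hae := ae_lt_top (Measurable.ennreal_tsum fun j => (hmeasg j).ennreal_ofReal) hlint.ne
  filter_upwards [hae] with ω hω
  have hterm : Tendsto (fun j => ENNReal.ofReal (g j ω)) atTop (nhds 0) :=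
    ENNReal.tendsto_atTop_zero_of_tsum_ne_top hω.ne
  have hreal : Tendsto (fun j => g j ω) atTop (nhds 0) := by
    have h1 := (ENNReal.tendsto_toReal (show (0:ENNReal) ≠ ⊤ by simp)).comp hterm
    simp only [ENNReal.toReal_zero] at h1
    refine h1.congr fun j => ?_
    exact ENNReal.toReal_ofReal (hgnn j ω)
  have hu : ∀ j : ℕ, Real.sqrt (Real.sqrt (g j ω)) = |VF X p s s' (j^2) ω| / ((j:ℝ)^2) := by
    intro j
    set u := |VF X p s s' (j^2) ω| / ((j:ℝ)^2) with hudef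
    have hu0 : 0 ≤ u := by positivity
    have hgu : g j ω = u^4 := by
      rcases Nat.eq_zero_or_pos j with hj | hj
      · subst hj
        simp only [hudef, hg, Nat.cast_zero]
        norm_num
      · have hjR : (0:ℝ) < (j:ℝ) := by exact_mod_cast hj
        rw [hudef, div_pow, hg]
        simp only
        congr 1
        · rw [← abs_pow, abs_of_nonneg (by positivity : (0:ℝ) ≤ (VF X p s s' (j^2) ω)^4)]
        · ring
    rw [hgu, show u^4 = (u^2)^2 by ring, Real.sqrt_sq (sq_nonneg u), Real.sqrt_sq hu0]
  have hs2 : Tendsto (fun j => Real.sqrt (Real.sqrt (g j ω))) atTop (nhds 0) := by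
    have hc := Real.continuous_sqrt.tendsto 0
    rw [Real.sqrt_zero] at hc
    exact hc.comp (hc.comp hreal)
  exact hs2.congr hu

end AS
section LemC

lemma pow_nn (hpnn : ∀ a b, 0 ≤ p a b) : ∀ (j : ℕ) (a b : S), 0 ≤ (p^j) a b := by
  intro j
  induction j with
  | zero =>
    intro a b; rw [pow_zero, Matrix.one_apply]; split <;> norm_num
  | succ j ih =>
    intro a b
    rw [pow_succ, Matrix.mul_apply]
    exact Finset.sum_nonneg fun k _ => mul_nonneg (ih a k) (hpnn k b)

lemma pow_row (hprow : ∀ a, ∑ b, p a b = 1) : ∀ (j : ℕ) (a : S), ∑ b, (p^j) a b = 1 := by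
  intro j
  induction j with
  | zero => intro a; simp [Matrix.one_apply]
  | succ j ih =>
    intro a
    simp_rw [pow_succ, Matrix.mul_apply]
    rw [Finset.sum_comm]
    calc ∑ k : S, ∑ b : S, (p^j) a k * p k b
        = ∑ k : S, (p^j) a k * ∑ b : S, p k b := by
          refine Finset.sum_congr rfl fun k _ => ?_
          rw [Finset.mul_sum]
      _ = ∑ k : S, (p^j) a k := by
          refine Finset.sum_congr rfl fun k _ => ?_
          rw [hprow k, mul_one]
      _ = 1 := ih a

lemma pow_le_one' (hpnn : ∀ a b, 0 ≤ p a b) (hprow : ∀ a, ∑ b, p a b = 1)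
    (j : ℕ) (a b : S) : (p^j) a b ≤ 1 := by
  rw [← pow_row (p := p) hprow j a]
  exact Finset.single_le_sum (f := fun i => (p^j) a i) (fun i _ => pow_nn hpnn j a i)
    (Finset.mem_univ b)

lemma prim' (hprow : ∀ a, ∑ b, p a b = 1) (hprim : ∃ m : ℕ, ∀ a b : S, 0 < (p ^ m) a b) :
    ∃ m : ℕ, 1 ≤ m ∧ ∀ a b : S, 0 < (p ^ m) a b := by
  obtain ⟨m, hm⟩ := hprim
  rcases Nat.eq_zero_or_pos m with h0 | h1
  · subst h0
    have hsub : ∀ a b : S, a = b := by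
      intro a b; by_contra hne'
      have h := hm a b
      rw [pow_zero, Matrix.one_apply_ne hne'] at h
      exact lt_irrefl 0 h
    refine ⟨1, le_rfl, fun a b => ?_⟩
    rw [pow_one]
    have hb : a = b := hsub a b
    subst hb
    have hsum : ∑ c, p a c = p a a :=
      Finset.sum_eq_single a (fun c _ hc => absurd (hsub c a) hc)
        (fun h => absurd (Finset.mem_univ a) h)
    rw [hprow a] at hsum
    linarith
  · exact ⟨m, h1, hm⟩

variable (s : S)

def AInd (X : ℕ → Ω → S) (s : S) (m J0 J : ℕ) (ω : Ω) : ℝ :=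
  ∏ i ∈ Finset.Icc (J0+1) (J0+J), (if X (i*m) ω = s then (0:ℝ) else 1)

lemma AInd_nonneg (m J0 J : ℕ) (ω : Ω) : 0 ≤ AInd X s m J0 J ω :=
  Finset.prod_nonneg fun i _ => by split <;> norm_num

lemma det_AInd (m J0 J : ℕ) : Det X ((J0+J)*m) (AInd X s m J0 J) :=
  det_of_ext fun ω₁ ω₂ hX => Finset.prod_congr rfl fun i hi => by
    rw [hX (i*m) (Nat.mul_le_mul_right m (Finset.mem_Icc.1 hi).2)]

lemma avoid (hmeas : ∀ n, Measurable (X n))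
    (hMarkov : ∀ (n : ℕ) (f : Fin n → S) (s s' : S),
      (ℙ {ω | (∀ k : Fin n, X k ω = f k) ∧ X n ω = s ∧ X (n + 1) ω = s'}).toReal
        = p s s' * (ℙ {ω | (∀ k : Fin n, X k ω = f k) ∧ X n ω = s}).toReal)
    (m : ℕ) {δ : ℝ} (hδ1 : δ ≤ 1) (hδ : ∀ s0, δ ≤ (p^m) s0 s) (J0 : ℕ) :
    ∀ J, ∫ ω, AInd X s m J0 J ω ∂ℙ ≤ (1-δ)^J := by
  intro J
  induction J with
  | zero =>
    have he : ∀ ω : Ω, AInd X s m J0 0 ω = 1 := by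
      intro ω
      rw [AInd, Nat.add_zero, Finset.Icc_eq_empty (by omega), Finset.prod_empty]
    rw [integral_congr_ae (Filter.Eventually.of_forall he)]
    simp
  | succ J ih =>
    have hdet : Det X ((J0+J)*m) (AInd X s m J0 J) := det_AInd s m J0 J
    set T := (J0+J)*m with hT
    have hindb : ∀ (k : ℕ) (a : S) (ω : Ω), |if X k ω = a then (1:ℝ) else 0| ≤ 1 := by
      intro k a ω; by_cases h : X k ω = a <;> simp [h]
    have hsplit : ∀ ω, AInd X s m J0 (J+1) ω
        = AInd X s m J0 J ω - AInd X s m J0 J ω * (if X (T+m) ω = s then (1:ℝ) else 0) := by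
      intro ω
      have h1 : J0 + (J+1) = (J0+J) + 1 := by omega
      have h2 : ((J0+J)+1)*m = T+m := by rw [hT, Nat.succ_mul]
      rw [AInd, h1, Finset.prod_Icc_succ_top (by omega), h2, ← AInd]
      by_cases h : X (T+m) ω = s <;> simp [h]
    have hintA : Integrable (AInd X s m J0 J) ℙ := hdet.integrable hmeas
    have hintAi : Integrable (fun ω => AInd X s m J0 J ω * (if X (T+m) ω = s then (1:ℝ) else 0)) ℙ :=
      hdet.integrable_mul hmeas (meas_ind hmeas (T+m) s) (hindb (T+m) s)
    rw [integral_congr_ae (Filter.Eventually.of_forall hsplit), integral_sub hintA hintAi]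
    -- lower bound on the subtracted term
    have hpart : ∀ ω, AInd X s m J0 J ω * (if X (T+m) ω = s then (1:ℝ) else 0)
        = ∑ s0 : S, AInd X s m J0 J ω *
            ((if X T ω = s0 then (1:ℝ) else 0) * (if X (T+m) ω = s then (1:ℝ) else 0)) := by
      intro ω
      rw [Finset.sum_eq_single (X T ω)]
      · simp
      · intro s0 _ hne
        rw [if_neg (show ¬ (X T ω = s0) from fun h => hne h.symm)]
        ring
      · intro h; exact absurd (Finset.mem_univ _) h
    have hint_each : ∀ s0 : S, Integrable (fun ω => AInd X s m J0 J ω *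
        ((if X T ω = s0 then (1:ℝ) else 0) * (if X (T+m) ω = s then (1:ℝ) else 0))) ℙ := by
      intro s0
      refine hdet.integrable_mul hmeas ((meas_ind hmeas T s0).mul (meas_ind hmeas (T+m) s))
        fun ω => ?_
      rw [abs_mul]
      exact mul_le_one₀ (hindb T s0 ω) (abs_nonneg _) (hindb (T+m) s ω)
    have hmain : ∫ ω, AInd X s m J0 J ω * (if X (T+m) ω = s then (1:ℝ) else 0) ∂ℙ
        ≥ δ * ∫ ω, AInd X s m J0 J ω ∂ℙ := by
      rw [integral_congr_ae (Filter.Eventually.of_forall hpart),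
        integral_finset_sum _ (fun s0 _ => hint_each s0)]
      have hstep : ∀ s0 : S, ∫ ω, AInd X s m J0 J ω *
          ((if X T ω = s0 then (1:ℝ) else 0) * (if X (T+m) ω = s then (1:ℝ) else 0)) ∂ℙ
          = (p^m) s0 s * ∫ ω, AInd X s m J0 J ω * (if X T ω = s0 then (1:ℝ) else 0) ∂ℙ :=
        fun s0 => core_j hmeas hMarkov m T (AInd X s m J0 J) hdet s0 s
      rw [Finset.sum_congr rfl (fun s0 _ => hstep s0)]
      have hnn : ∀ s0 : S, 0 ≤ ∫ ω, AInd X s m J0 J ω * (if X T ω = s0 then (1:ℝ) else 0) ∂ℙ := by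
        intro s0
        refine integral_nonneg fun ω => ?_
        refine mul_nonneg (AInd_nonneg s m J0 J ω) ?_
        split <;> norm_num
      have hge : ∑ s0 : S, (p^m) s0 s * ∫ ω, AInd X s m J0 J ω * (if X T ω = s0 then (1:ℝ) else 0) ∂ℙ
          ≥ ∑ s0 : S, δ * ∫ ω, AInd X s m J0 J ω * (if X T ω = s0 then (1:ℝ) else 0) ∂ℙ :=
        Finset.sum_le_sum fun s0 _ => mul_le_mul_of_nonneg_right (hδ s0) (hnn s0)
      have hsum : ∑ s0 : S, δ * ∫ ω, AInd X s m J0 J ω * (if X T ω = s0 then (1:ℝ) else 0) ∂ℙ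
          = δ * ∫ ω, AInd X s m J0 J ω ∂ℙ := by
        rw [← Finset.mul_sum]
        congr 1
        calc ∑ s0 : S, ∫ ω, AInd X s m J0 J ω * (if X T ω = s0 then (1:ℝ) else 0) ∂ℙ
            = ∫ ω, ∑ s0 : S, AInd X s m J0 J ω * (if X T ω = s0 then (1:ℝ) else 0) ∂ℙ :=
              (integral_finset_sum _ (fun s0 _ => hdet.integrable_mul hmeas
                (meas_ind hmeas T s0) (hindb T s0))).symm
          _ = ∫ ω, AInd X s m J0 J ω ∂ℙ := by
              refine integral_congr_ae (Filter.Eventually.of_forall fun ω => ?_)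
              show ∑ s0 : S, AInd X s m J0 J ω * (if X T ω = s0 then (1:ℝ) else 0)
                = AInd X s m J0 J ω
              rw [Finset.sum_eq_single (X T ω)]
              · simp
              · intro s0 _ hne
                rw [if_neg (show ¬ (X T ω = s0) from fun h => hne h.symm), mul_zero]
              · intro h; exact absurd (Finset.mem_univ _) h
      rw [← hsum]
      exact hge
    have hfin : ∫ ω, AInd X s m J0 J ω ∂ℙ - ∫ ω, AInd X s m J0 J ω *
        (if X (T+m) ω = s then (1:ℝ) else 0) ∂ℙ ≤ (1-δ) * ∫ ω, AInd X s m J0 J ω ∂ℙ := by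
      have := hmain
      nlinarith [this]
    refine hfin.trans ?_
    rw [pow_succ, mul_comm ((1-δ)^J) (1-δ)]
    exact mul_le_mul_of_nonneg_left ih (by linarith)

lemma bad_null (hmeas : ∀ n, Measurable (X n))
    (hMarkov : ∀ (n : ℕ) (f : Fin n → S) (s s' : S),
      (ℙ {ω | (∀ k : Fin n, X k ω = f k) ∧ X n ω = s ∧ X (n + 1) ω = s'}).toReal
        = p s s' * (ℙ {ω | (∀ k : Fin n, X k ω = f k) ∧ X n ω = s}).toReal)
    (m : ℕ) {δ : ℝ} (hδ0 : 0 < δ) (hδ1 : δ ≤ 1) (hδ : ∀ s0, δ ≤ (p^m) s0 s) (J0 : ℕ) :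
    ℙ {ω | ∀ i, J0 < i → X (i*m) ω ≠ s} = 0 := by
  classical
  set Bad := {ω | ∀ i, J0 < i → X (i*m) ω ≠ s} with hBad
  have hBmeas : MeasurableSet Bad := by
    have he : Bad = ⋂ i : ℕ, ⋂ (_ : J0 < i), {ω | X (i*m) ω = s}ᶜ := by
      ext ω; simp [hBad, Set.mem_iInter]
    rw [he]
    exact MeasurableSet.iInter fun i => MeasurableSet.iInter fun _ => (meas_eq hmeas _ s).compl
  have hle : ∀ J, (ℙ Bad).toReal ≤ (1-δ)^J := by
    intro J
    have h1 : (ℙ Bad).toReal = ∫ ω, (if ω ∈ Bad then (1:ℝ) else 0) ∂ℙ := by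
      rw [int_ite (by simpa using hBmeas) 1, one_mul]
      congr 1
    have h2 : ∀ ω, (if ω ∈ Bad then (1:ℝ) else 0) ≤ AInd X s m J0 J ω := by
      intro ω
      by_cases hω : ω ∈ Bad
      · rw [if_pos hω]
        have he : AInd X s m J0 J ω = 1 :=
          Finset.prod_eq_one fun i hi => by
            rw [if_neg (hω i (by have := (Finset.mem_Icc.1 hi).1; omega))]
        rw [he]
      · rw [if_neg hω]; exact AInd_nonneg s m J0 J ω
    rw [h1]
    calc ∫ ω, (if ω ∈ Bad then (1:ℝ) else 0) ∂ℙ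
        ≤ ∫ ω, AInd X s m J0 J ω ∂ℙ :=
          integral_mono (integrable_ite (by simpa using hBmeas) 1)
            ((det_AInd s m J0 J).integrable hmeas) h2
      _ ≤ (1-δ)^J := avoid s hmeas hMarkov m hδ1 hδ J0 J
  have h0 : (ℙ Bad).toReal ≤ 0 :=
    ge_of_tendsto (tendsto_pow_atTop_nhds_zero_of_lt_one (by linarith) (by linarith))
      (Filter.Eventually.of_forall hle)
  have hz : (ℙ Bad).toReal = 0 := le_antisymm h0 ENNReal.toReal_nonneg
  have := (ENNReal.toReal_eq_zero_iff _).1 hz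
  exact this.resolve_right (measure_ne_top ℙ _)

lemma Ns_to_top (hmeas : ∀ n, Measurable (X n))
    (hMarkov : ∀ (n : ℕ) (f : Fin n → S) (s s' : S),
      (ℙ {ω | (∀ k : Fin n, X k ω = f k) ∧ X n ω = s ∧ X (n + 1) ω = s'}).toReal
        = p s s' * (ℙ {ω | (∀ k : Fin n, X k ω = f k) ∧ X n ω = s}).toReal)
    (hpnn : ∀ a b, 0 ≤ p a b) (hprow : ∀ a, ∑ b, p a b = 1)
    (hprim : ∃ m : ℕ, ∀ a b : S, 0 < (p ^ m) a b) :
    ∀ᵐ ω ∂ℙ, Tendsto (fun t => NsF X s t ω) atTop atTop := by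
  obtain ⟨m, hm1, hmpos⟩ := prim' hprow hprim
  have hS : Nonempty S := ⟨s⟩
  set δ : ℝ := Finset.univ.inf' Finset.univ_nonempty (fun s0 => (p^m) s0 s) with hδdef
  have hδ0 : 0 < δ := Finset.lt_inf'_iff _ |>.2 fun s0 _ => hmpos s0 s
  have hδle : ∀ s0, δ ≤ (p^m) s0 s := fun s0 => Finset.inf'_le _ (Finset.mem_univ s0)
  have hδ1 : δ ≤ 1 := (hδle s).trans (pow_le_one' hpnn hprow m s s)
  have hnull : ℙ (⋃ J0 : ℕ, {ω | ∀ i, J0 < i → X (i*m) ω ≠ s}) = 0 :=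
    measure_iUnion_null fun J0 => bad_null s hmeas hMarkov m hδ0 hδ1 hδle J0
  have hae : ∀ᵐ ω ∂ℙ, ω ∉ ⋃ J0 : ℕ, {ω | ∀ i, J0 < i → X (i*m) ω ≠ s} :=
    (measure_eq_zero_iff_ae_notMem).1 hnull
  filter_upwards [hae] with ω hω
  have hvis : ∀ A : ℕ, ∃ n, A < n ∧ X n ω = s := by
    intro A
    have hnb : ω ∉ {ω | ∀ i, A < i → X (i*m) ω ≠ s} :=
      fun hb => hω (Set.mem_iUnion.2 ⟨A, hb⟩)
    simp only [Set.mem_setOf_eq, not_forall] at hnb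
    obtain ⟨i, hi, hXi⟩ := hnb
    rw [not_not] at hXi
    refine ⟨i*m, lt_of_lt_of_le hi ?_, hXi⟩
    calc i = i * 1 := (mul_one i).symm
      _ ≤ i * m := Nat.mul_le_mul_left i hm1
  have hunb : ∀ K : ℕ, ∃ T, K ≤ NsF X s T ω := by
    intro K
    induction K with
    | zero => exact ⟨0, Nat.zero_le _⟩
    | succ K ih =>
      obtain ⟨T, hT⟩ := ih
      obtain ⟨n, hn, hX⟩ := hvis T
      refine ⟨n+1, ?_⟩
      rw [Ns_succ s hX]
      have hm : NsF X s T ω ≤ NsF X s n ω := Ns_mono s ω (le_of_lt hn)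
      omega
  exact tendsto_atTop_atTop_of_monotone (fun a b hab => Ns_mono s ω hab) hunb

end LemC

end Stmt11
open Stmt11 in
/-- Let N_s(t) be the number of visits to state s of an irreducible aperiodic
finite Markov chain up to time t, and N_{ss'}(t) the number of one-step transitions from s to s'
up to time t. Then the estimator p̂_{ss'}(t) = N_{ss'}(t)/N_s(t) converges almost surely to the
transition probability p_{ss'} as t → ∞. -/
theorem stmt11 {S : Type*} [Fintype S] [DecidableEq S] [MeasurableSpace S]
    [MeasurableSingletonClass S]
    {Ω : Type*} [MeasurableSpace Ω] (ℙ : Measure Ω) [IsProbabilityMeasure ℙ]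
    (X : ℕ → Ω → S) (hmeas : ∀ n, Measurable (X n))
    (p : Matrix S S ℝ) (hpnn : ∀ s s', 0 ≤ p s s') (hprow : ∀ s, ∑ s', p s s' = 1)
    (hMarkov : ∀ (n : ℕ) (f : Fin n → S) (s s' : S),
      (ℙ {ω | (∀ k : Fin n, X k ω = f k) ∧ X n ω = s ∧ X (n + 1) ω = s'}).toReal
        = p s s' * (ℙ {ω | (∀ k : Fin n, X k ω = f k) ∧ X n ω = s}).toReal)
    (hprim : ∃ m : ℕ, ∀ s s' : S, 0 < (p ^ m) s s') :
    ∀ s s' : S, ∀ᵐ ω ∂ℙ, Filter.Tendsto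
      (fun t : ℕ =>
        (((Finset.range t).filter (fun n => X n ω = s ∧ X (n + 1) ω = s')).card : ℝ) /
          (((Finset.range t).filter (fun n => X n ω = s)).card : ℝ))
      Filter.atTop (nhds (p s s')) := by
  intro s s'
  have h1 := as_subseq (ℙ := ℙ) s s' hmeas hMarkov hpnn hprow
  have h2 := Ns_to_top (ℙ := ℙ) s hmeas hMarkov hpnn hprow hprim
  filter_upwards [h1, h2] with ω hV hN
  have hdiff : ∀ K' K : ℕ, K' ≤ K → |VF X p s s' K ω - VF X p s s' K' ω| ≤ (K:ℝ) - K' :=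
    fun K' K h => VF_sub_abs s s' hpnn hprow h ω
  have hall : Filter.Tendsto (fun K : ℕ => VF X p s s' K ω / (K:ℝ))
      Filter.atTop (nhds 0) :=
    subseq_to_all _ hdiff hV
  have hcomp : Filter.Tendsto
      (fun t : ℕ => VF X p s s' (NsF X s t ω) ω / ((NsF X s t ω : ℕ) : ℝ))
      Filter.atTop (nhds 0) := hall.comp hN
  have hev : ∀ᶠ t in Filter.atTop, 1 ≤ NsF X s t ω := hN.eventually_ge_atTop 1
  have heq : ∀ᶠ t in Filter.atTop,
      p s s' + VF X p s s' (NsF X s t ω) ω / ((NsF X s t ω : ℕ) : ℝ)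
      = (((Finset.range t).filter (fun n => X n ω = s ∧ X (n + 1) ω = s')).card : ℝ) /
          (((Finset.range t).filter (fun n => X n ω = s)).card : ℝ) := by
    filter_upwards [hev] with t ht
    have hNs1 : (1:ℝ) ≤ ((NsF X s t ω : ℕ) : ℝ) := by exact_mod_cast ht
    have hNs0 : ((NsF X s t ω : ℕ) : ℝ) ≠ 0 := by linarith
    rw [VF_eq_M]
    have e1 : ∀ n : ℕ, DF X p s s' n ω
        = (if X n ω = s ∧ X (n+1) ω = s' then (1:ℝ) else 0)
          - p s s' * (if X n ω = s then (1:ℝ) else 0) := by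
      intro n
      by_cases ha : X n ω = s <;> by_cases hb : X (n+1) ω = s' <;> simp [DF, ha, hb]
    rw [Finset.sum_congr rfl (fun n _ => e1 n), Finset.sum_sub_distrib, ← Finset.mul_sum,
      Finset.sum_boole, Finset.sum_boole]
    have hNcast : ((NsF X s t ω : ℕ) : ℝ)
        = (((Finset.range t).filter (fun n => X n ω = s)).card : ℝ) := by
      rw [NsF]
    rw [hNcast] at hNs0 ⊢
    rw [sub_div, mul_div_assoc, div_self hNs0, mul_one]
    ring
  have hlim : Filter.Tendsto
      (fun t : ℕ => p s s' + VF X p s s' (NsF X s t ω) ω / ((NsF X s t ω : ℕ) : ℝ))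
      Filter.atTop (nhds (p s s')) := by
    have := (tendsto_const_nhds (x := p s s') (f := Filter.atTop (α := ℕ))).add hcomp
    rwa [add_zero] at this
  exact hlim.congr' heq
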